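/- arXiv:1909.11884 — 2 statements merged into one kernel-verified Lean document; each statement's English description precedes it below -/
import Mathlib

section
/- Let d ≥ 2 and let K be a convex body in S^d. Then no set of at most d points lying on a (d−1)-dimensional great sphere of S^d disjoint from K illuminates K; consequently I_{S^d}(K) ≥ d+1. -/
open RealInnerProductSpace Metric Set

noncomputable section

/-- Euclidean `n`-space. -/
abbrev Euc (n : ℕ) := EuclideanSpace ℝ (Fin n)

/-- The unit sphere `S^d` in `ℝ^{d+1}`. -/
def uSphere (d : ℕ) : Set (Euc (d + 1)) := Metric.sphere 0 1

/-- Radial (normalizing) projection onto the unit sphere. -/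
def nproj {n : ℕ} (x : Euc n) : Euc n := ‖x‖⁻¹ • x

/-- The spherical segment (shorter great-circle arc) with endpoints `p` and `q`
(meaningful when `p ≠ -q`). -/
def sphSeg {n : ℕ} (p q : Euc n) : Set (Euc n) :=
  (fun t : ℝ => nproj ((1 - t) • p + t • q)) '' Set.Icc 0 1

/-- The relative interior of the spherical segment with endpoints `p` and `q`. -/
def sphOpenSeg {n : ℕ} (p q : Euc n) : Set (Euc n) :=
  (fun t : ℝ => nproj ((1 - t) • p + t • q)) '' Set.Ioo 0 1

/-- The great circle through `p` and `q`. -/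
def greatCircle (d : ℕ) (p q : Euc (d + 1)) : Set (Euc (d + 1)) :=
  {z ∈ uSphere d | z ∈ Submodule.span ℝ {p, q}}

/-- The open hemisphere with center `x`. -/
def openHemi (d : ℕ) (x : Euc (d + 1)) : Set (Euc (d + 1)) :=
  {y ∈ uSphere d | 0 < ⟪x, y⟫}

/-- The `(d-1)`-dimensional great sphere of `S^d` with pole `u`. -/
def greatSphere (d : ℕ) (u : Euc (d + 1)) : Set (Euc (d + 1)) :=
  {y ∈ uSphere d | ⟪u, y⟫ = 0}

/-- A set `C ⊆ S^d` is spherically convex if it is contained in an open hemisphere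
and contains the shorter arc connecting any two of its points. -/
def SphConvex (d : ℕ) (C : Set (Euc (d + 1))) : Prop :=
  C ⊆ uSphere d ∧ (∃ x ∈ uSphere d, C ⊆ openHemi d x) ∧
    ∀ p ∈ C, ∀ q ∈ C, sphSeg p q ⊆ C

/-- The interior of `K` relative to the sphere `S^d`. -/
def sphInt (d : ℕ) (K : Set (Euc (d + 1))) : Set (Euc (d + 1)) :=
  {x ∈ uSphere d | ∃ U : Set (Euc (d + 1)), IsOpen U ∧ x ∈ U ∧ U ∩ uSphere d ⊆ K}

/-- The boundary of a closed set `K ⊆ S^d` relative to the sphere `S^d`. -/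
def sphBd (d : ℕ) (K : Set (Euc (d + 1))) : Set (Euc (d + 1)) := K \ sphInt d K

/-- A convex body in `S^d`: a compact spherically convex set with nonempty interior
relative to `S^d`. -/
def IsSphBody (d : ℕ) (K : Set (Euc (d + 1))) : Prop :=
  IsCompact K ∧ SphConvex d K ∧ (sphInt d K).Nonempty

/-- The boundary point `q` of `K` is illuminated from the point `p`. -/
def SphIlluminated (d : ℕ) (K : Set (Euc (d + 1))) (p q : Euc (d + 1)) : Prop :=
  q ≠ -p ∧ sphSeg p q ∩ sphInt d K = ∅ ∧ (greatCircle d p q ∩ sphInt d K).Nonempty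

/-- The set `S` illuminates the convex body `K ⊆ S^d`. -/
def SphIlluminates (d : ℕ) (K S : Set (Euc (d + 1))) : Prop :=
  ∀ q ∈ sphBd d K, ∃ p ∈ S, SphIlluminated d K p q

/-- The illumination number of a convex body `K` in `S^d`: the smallest cardinality of
a set illuminating `K` and lying on a `(d-1)`-dimensional great sphere disjoint from `K`. -/
def sphIllumNumber (d : ℕ) (K : Set (Euc (d + 1))) : ℕ∞ :=
  sInf {n : ℕ∞ | ∃ u ∈ uSphere d, greatSphere d u ∩ K = ∅ ∧
    ∃ S : Finset (Euc (d + 1)), ↑S ⊆ greatSphere d u ∧ SphIlluminates d K ↑S ∧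
      (S.card : ℕ∞) = n}

/-- A convex body in a Euclidean space: compact, convex, with nonempty interior. -/
def IsConvexBody {n : ℕ} (K : Set (Euc n)) : Prop :=
  IsCompact K ∧ Convex ℝ K ∧ (interior K).Nonempty

/-- The boundary point `p` of `K` is illuminated from the direction `v`. -/
def IlluminatedDir {n : ℕ} (K : Set (Euc n)) (v p : Euc n) : Prop :=
  ∃ t : ℝ, 0 < t ∧ p + t • v ∈ interior K

/-- The finite set of unit vectors `D` illuminates the convex body `K`. -/
def IlluminatesDirs {n : ℕ} (D : Finset (Euc n)) (K : Set (Euc n)) : Prop :=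
  (∀ v ∈ D, ‖v‖ = 1) ∧ ∀ p ∈ frontier K, ∃ v ∈ D, IlluminatedDir K v p

/-- The illumination number of a convex body in Euclidean space. -/
def illumNumber {n : ℕ} (K : Set (Euc n)) : ℕ∞ :=
  sInf {m : ℕ∞ | ∃ D : Finset (Euc n), IlluminatesDirs D K ∧ (D.card : ℕ∞) = m}

/-- The illumination number of a convex body `K` of an affine subspace of a Euclidean
space, computed within the affine span of `K` (directions are parallel to the affine
span; interior and boundary are relative to the affine span). -/
def intIllumNumber {n : ℕ} (K : Set (Euc n)) : ℕ∞ :=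
  sInf {m : ℕ∞ | ∃ D : Finset (Euc n),
    (∀ v ∈ D, ‖v‖ = 1 ∧ v ∈ (affineSpan ℝ K).direction) ∧
    (∀ p ∈ intrinsicFrontier ℝ K, ∃ v ∈ D, ∃ t : ℝ, 0 < t ∧
      p + t • v ∈ intrinsicInterior ℝ K) ∧
    (D.card : ℕ∞) = m}

/-- A face of a convex body `K` in Euclidean space: a convex subset `F ⊆ K` such that
any segment of `K` whose relative interior meets `F` is contained in `F`. -/
def IsFace {n : ℕ} (K F : Set (Euc n)) : Prop :=
  F ⊆ K ∧ Convex ℝ F ∧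
    ∀ x ∈ K, ∀ y ∈ K, (openSegment ℝ x y ∩ F).Nonempty → segment ℝ x y ⊆ F

/-- The dimension of a subset of a Euclidean space (dimension of its affine hull). -/
def faceDim {n : ℕ} (F : Set (Euc n)) : ℕ := Module.finrank ℝ (vectorSpan ℝ F)

/-- A face of a convex body `K` in `S^d`: a spherically convex subset `F ⊆ K` such that
any spherical segment of `K` whose relative interior meets `F` is contained in `F`. -/
def IsSphFace (d : ℕ) (K F : Set (Euc (d + 1))) : Prop :=
  F ⊆ K ∧ SphConvex d F ∧
    ∀ p ∈ K, ∀ q ∈ K, (sphOpenSeg p q ∩ F).Nonempty → sphSeg p q ⊆ F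

/-- The (spherical) dimension of a subset `F` of `S^d`: one less than the dimension of
its linear hull. -/
def sphFaceDim (d : ℕ) (F : Set (Euc (d + 1))) : ℕ :=
  Module.finrank ℝ (Submodule.span ℝ F) - 1

/-- The polar body of a convex body `K ⊆ S^d`. -/
def sphPolar (d : ℕ) (K : Set (Euc (d + 1))) : Set (Euc (d + 1)) :=
  {x ∈ uSphere d | ∀ y ∈ K, ⟪x, y⟫ ≤ 0}

/-- An exposed face of a convex body `L` in `S^d`: a nonempty intersection of `L`
with a supporting great sphere. -/
def IsSphExposedFace (d : ℕ) (L F : Set (Euc (d + 1))) : Prop :=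
  F.Nonempty ∧ ∃ u ∈ uSphere d, (∀ y ∈ L, ⟪u, y⟫ ≤ 0) ∧ F = {y ∈ L | ⟪u, y⟫ = 0}

/-- The conjugate face of an exposed face `F` of a convex body `K ⊆ S^d`. -/
def conjFace (d : ℕ) (K F : Set (Euc (d + 1))) : Set (Euc (d + 1)) :=
  {x ∈ sphPolar d K | ∀ y ∈ F, ⟪x, y⟫ = 0}

/-- Two Euclidean convex bodies are combinatorially equivalent if there is a
homeomorphism between their boundaries mapping faces to faces. -/
def CombEquiv {n : ℕ} (K K' : Set (Euc n)) : Prop :=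
  ∃ h : (frontier K) ≃ₜ (frontier K'),
    ∀ X : Set (frontier K),
      IsFace K (Subtype.val '' X) ↔ IsFace K' (Subtype.val '' (h '' X))

/-- The combinatorial illumination number of a Euclidean convex body `K`: the smallest
number of directions that illuminate some convex body combinatorially equivalent to `K`. -/
def combIllumNumber {n : ℕ} (K : Set (Euc n)) : ℕ∞ :=
  sInf {m : ℕ∞ | ∃ K' : Set (Euc n), IsConvexBody K' ∧ CombEquiv K K' ∧
    ∃ D : Finset (Euc n), IlluminatesDirs D K' ∧ (D.card : ℕ∞) = m}

/-- A convex polytope in `S^d`: a convex body that is the intersection of finitely many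
closed hemispheres. -/
def IsSphPolytope (d : ℕ) (P : Set (Euc (d + 1))) : Prop :=
  IsSphBody d P ∧ ∃ s : Finset (Euc (d + 1)), (∀ u ∈ s, u ∈ uSphere d) ∧
    P = uSphere d ∩ {y | ∀ u ∈ s, ⟪u, y⟫ ≤ 0}

end

/-!
`K` lies on one side of the great sphere, say in the open hemisphere `⟪u, ·⟫ > 0`, while the at
most `d` light sources lie in the `d`-dimensional space `uᗮ`; hence some nonzero `c ⊥ u` has
`⟪p, c⟫ ≤ 0` for every source `p`. Maximizing `⟪c, y⟫ / ⟪u, y⟫` over `K` tilts `c` into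
`c' = c - M u`, the normal of a great sphere supporting `K` at a point `q`, with `K` and all sources
in the closed hemisphere `⟪c', ·⟫ ≤ 0`. A point `a p + b q` of the great circle through a source
`p` and `q` that lies in `K` has `b > 0`; if `a ≥ 0` it is on the arc from `p` to `q`, and if
`a < 0` then `⟪c', a p + b q⟫ ≥ 0`, so it is not interior to `K`. Thus `q` is not illuminated.
-/

open Module Topology

theorem Submodule.exists_ne_zero_inner_nonpos {E : Type*} [NormedAddCommGroup E]
    [InnerProductSpace ℝ E] (W : Submodule ℝ E) [FiniteDimensional ℝ W]
    (hW : 0 < finrank ℝ W) (S : Finset E) (hS : S.card ≤ finrank ℝ W) :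
    ∃ c ∈ W, c ≠ 0 ∧ ∀ p ∈ S, ⟪p, c⟫ ≤ 0 := by
  let Φ : W →ₗ[ℝ] S → ℝ := LinearMap.pi fun p => (innerₗ E (p : E)).comp W.subtype
  -- if `Φ` is injective it is an isomorphism, so all `⟪p, ·⟫` can be made `-1` at once
  by_cases hΦ : Function.Injective Φ
  · have hdim : finrank ℝ W = finrank ℝ (S → ℝ) := by
      have := LinearMap.finrank_le_finrank_of_injective hΦ
      simp only [finrank_fintype_fun_eq_card, Fintype.card_coe] at this ⊢
      omega
    obtain ⟨c, hc⟩ := (LinearMap.injective_iff_surjective_of_finrank_eq_finrank hdim).1 hΦ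
      fun _ => -1
    obtain ⟨p, hp⟩ : S.Nonempty := Finset.card_pos.1 (by
      simpa [hdim, finrank_fintype_fun_eq_card] using hW)
    have hcp : ∀ p ∈ S, ⟪p, (c : E)⟫ = -1 := fun p hp => congrFun hc ⟨p, hp⟩
    refine ⟨c, c.2, fun h0 => ?_, fun p hp => by linarith [hcp p hp]⟩
    simpa [h0] using hcp p hp
  · obtain ⟨c, hc, hc0⟩ := (LinearMap.ker Φ).ne_bot_iff.1 (mt LinearMap.ker_eq_bot.1 hΦ)
    have hcp : ∀ p ∈ S, ⟪p, (c : E)⟫ = 0 := fun p hp => congrFun hc ⟨p, hp⟩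
    exact ⟨c, c.2, by simpa using hc0, fun p hp => (hcp p hp).le⟩

section nproj

variable {n : ℕ}

theorem inner_nproj (v x : Euc n) : ⟪v, nproj x⟫ = ‖x‖⁻¹ * ⟪v, x⟫ :=
  real_inner_smul_right _ _ _

theorem norm_nproj {x : Euc n} (hx : x ≠ 0) : ‖nproj x‖ = 1 := by
  rw [nproj, norm_smul, norm_inv, norm_norm, inv_mul_cancel₀ (norm_ne_zero_iff.2 hx)]

theorem nproj_of_norm_eq_one {x : Euc n} (hx : ‖x‖ = 1) : nproj x = x := by
  simp [nproj, hx]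

theorem nproj_smul_of_pos {r : ℝ} (hr : 0 < r) (x : Euc n) : nproj (r • x) = nproj x := by
  rw [nproj, nproj, norm_smul, Real.norm_of_nonneg hr.le, smul_smul, mul_inv, mul_right_comm,
    inv_mul_cancel₀ hr.ne', one_mul]

theorem continuousAt_nproj {x : Euc n} (hx : x ≠ 0) : ContinuousAt nproj x :=
  (continuous_norm.continuousAt.inv₀ (norm_ne_zero_iff.2 hx)).smul continuousAt_id

theorem nproj_smul_add_smul_mem_sphSeg {a b : ℝ} (ha : 0 ≤ a) (hb : 0 ≤ b) (hab : 0 < a + b)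
    (p q : Euc n) : nproj (a • p + b • q) ∈ sphSeg p q := by
  refine ⟨b / (a + b), ⟨by positivity, (div_le_one hab).2 (by linarith)⟩, ?_⟩
  have hcomb : (1 - b / (a + b)) • p + (b / (a + b)) • q = (a + b)⁻¹ • (a • p + b • q) := by
    rw [smul_add, smul_smul, smul_smul, one_sub_div hab.ne', add_sub_cancel_right, div_eq_inv_mul,
      div_eq_inv_mul]
  simp only [hcomb, nproj_smul_of_pos (inv_pos.2 hab)]

end nproj

section sphere

variable {d : ℕ}

theorem mem_uSphere_iff {x : Euc (d + 1)} : x ∈ uSphere d ↔ ‖x‖ = 1 := by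
  simp [uSphere]

theorem nproj_mem_uSphere {x : Euc (d + 1)} (hx : x ≠ 0) : nproj x ∈ uSphere d :=
  mem_uSphere_iff.2 (norm_nproj hx)

theorem sphInt_subset (K : Set (Euc (d + 1))) : sphInt d K ⊆ K :=
  fun _ ⟨hx, _, _, hxU, hUK⟩ => hUK ⟨hxU, hx⟩

theorem greatSphere_neg (u : Euc (d + 1)) : greatSphere d (-u) = greatSphere d u := by
  simp [greatSphere]

theorem SphConvex.inner_pos_of_disjoint {K : Set (Euc (d + 1))} (hK : SphConvex d K)
    {u y₀ : Euc (d + 1)} (hdisj : greatSphere d u ∩ K = ∅) (hy₀ : y₀ ∈ K) (h₀ : 0 < ⟪u, y₀⟫) :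
    ∀ y ∈ K, 0 < ⟪u, y⟫ := by
  obtain ⟨-, ⟨x, -, hKx⟩, hseg⟩ := hK
  intro y hy
  by_contra! hy0
  set v := (-⟪u, y⟫) • y₀ + ⟪u, y₀⟫ • y
  -- `v` is a nonnegative combination of `y₀` and `y` on the great sphere of `u`
  have huv : ⟪u, v⟫ = 0 := by
    simp only [v, inner_add_right, real_inner_smul_right]
    ring
  have hxv : 0 < ⟪x, v⟫ := by
    have := (hKx hy₀).2
    have := (hKx hy).2
    simp only [v, inner_add_right, real_inner_smul_right]
    nlinarith
  have hv : v ≠ 0 := by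
    rintro hv
    simp [hv] at hxv
  have hvK : nproj v ∈ K :=
    hseg y₀ hy₀ y hy (nproj_smul_add_smul_mem_sphSeg (by linarith) h₀.le (by linarith) y₀ y)
  have hvS : nproj v ∈ greatSphere d u :=
    ⟨nproj_mem_uSphere hv, by rw [inner_nproj, huv, mul_zero]⟩
  exact eq_empty_iff_forall_notMem.1 hdisj _ ⟨hvS, hvK⟩

theorem SphConvex.exists_inner_pos_of_disjoint {K : Set (Euc (d + 1))} (hK : SphConvex d K)
    (hKne : K.Nonempty) {u : Euc (d + 1)} (hdisj : greatSphere d u ∩ K = ∅) :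
    ∃ v ∈ ({u, -u} : Set (Euc (d + 1))), ∀ y ∈ K, 0 < ⟪v, y⟫ := by
  obtain ⟨y₀, hy₀⟩ := hKne
  have hu₀ : ⟪u, y₀⟫ ≠ 0 := fun h =>
    eq_empty_iff_forall_notMem.1 hdisj y₀ ⟨⟨hK.1 hy₀, h⟩, hy₀⟩
  rcases hu₀.lt_or_gt with h | h
  · refine ⟨-u, by simp, hK.inner_pos_of_disjoint ?_ hy₀ ?_⟩
    · rwa [greatSphere_neg]
    · rwa [inner_neg_left, neg_pos]
  · exact ⟨u, by simp, hK.inner_pos_of_disjoint hdisj hy₀ h⟩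

theorem inner_neg_of_mem_sphInt {K : Set (Euc (d + 1))} {c : Euc (d + 1)} (hc : c ≠ 0)
    (hK : ∀ y ∈ K, ⟪c, y⟫ ≤ 0) {z : Euc (d + 1)} (hz : z ∈ sphInt d K) : ⟪c, z⟫ < 0 := by
  obtain ⟨hzs, U, hU, hzU, hUK⟩ := hz
  by_contra! hcz
  have hcz : ⟪c, z⟫ = 0 := le_antisymm (hK z (hUK ⟨hzU, hzs⟩)) hcz
  have hz0 : z ≠ 0 := by
    rintro rfl
    simp [mem_uSphere_iff] at hzs
  -- pushing `z` towards `c` stays in `K` for small times but leaves the hemisphere `⟪c, ·⟫ ≤ 0`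
  have hγ : ContinuousAt (fun ε : ℝ => nproj (z + ε • c)) 0 :=
    (continuousAt_nproj (by simpa using hz0)).comp (by fun_prop)
  have hγ₀ : nproj (z + (0 : ℝ) • c) = z := by
    rw [zero_smul, add_zero, nproj_of_norm_eq_one (mem_uSphere_iff.1 hzs)]
  have hγU : ∀ᶠ ε in 𝓝[>] (0 : ℝ), nproj (z + ε • c) ∈ U :=
    nhdsWithin_le_nhds (hγ.eventually_mem (by rw [hγ₀]; exact hU.mem_nhds hzU))
  obtain ⟨ε, hεU, hε⟩ := (hγU.and self_mem_nhdsWithin).exists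
  have hcε : ⟪c, z + ε • c⟫ = ε * ‖c‖ ^ 2 := by
    rw [inner_add_right, real_inner_smul_right, hcz, real_inner_self_eq_norm_sq, zero_add]
  have hpos : 0 < ⟪c, z + ε • c⟫ := hcε ▸ mul_pos hε (pow_pos (norm_pos_iff.2 hc) 2)
  have hne : z + ε • c ≠ 0 := by
    rintro h
    simp [h] at hpos
  have := hK _ (hUK ⟨hεU, nproj_mem_uSphere hne⟩)
  rw [inner_nproj] at this
  exact this.not_gt (mul_pos (inv_pos.2 (norm_pos_iff.2 hne)) hpos)

theorem IsCompact.exists_supporting_inner {K : Set (Euc (d + 1))} (hKc : IsCompact K)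
    (hKne : K.Nonempty) {u : Euc (d + 1)} (hpos : ∀ y ∈ K, 0 < ⟪u, y⟫) (c : Euc (d + 1)) :
    ∃ q ∈ K, ∃ M : ℝ, (∀ y ∈ K, ⟪c - M • u, y⟫ ≤ 0) ∧ ⟪c - M • u, q⟫ = 0 := by
  have hcont : ContinuousOn (fun y => ⟪c, y⟫ / ⟪u, y⟫) K :=
    (continuous_const.inner continuous_id).continuousOn.div
      (continuous_const.inner continuous_id).continuousOn fun y hy => (hpos y hy).ne'
  obtain ⟨q, hqK, hqmax⟩ := hKc.exists_isMaxOn hKne hcont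
  refine ⟨q, hqK, ⟪c, q⟫ / ⟪u, q⟫, fun y hy => ?_, ?_⟩
  · have := (div_le_iff₀ (hpos y hy)).1 (hqmax hy)
    rw [inner_sub_left, real_inner_smul_left]
    linarith
  · rw [inner_sub_left, real_inner_smul_left, div_mul_cancel₀ _ (hpos q hqK).ne', sub_self]

theorem not_sphIlluminated_of_inner {K : Set (Euc (d + 1))} {u c p q : Euc (d + 1)}
    (hpos : ∀ y ∈ K, 0 < ⟪u, y⟫) (hup : ⟪u, p⟫ = 0) (hqK : q ∈ K)
    (hint : ∀ z ∈ sphInt d K, ⟪c, z⟫ < 0) (hcq : ⟪c, q⟫ = 0) (hcp : ⟪c, p⟫ ≤ 0) :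
    ¬ SphIlluminated d K p q := by
  rintro ⟨-, hseg, z, ⟨hzs, hzspan⟩, hzint⟩
  obtain ⟨a, b, rfl⟩ := Submodule.mem_span_pair.1 hzspan
  have hb : 0 < b := by
    have huz := hpos _ (sphInt_subset K hzint)
    rw [inner_add_right, real_inner_smul_right, real_inner_smul_right, hup] at huz
    exact pos_of_mul_pos_left (by linarith) (hpos q hqK).le
  have ha : a < 0 := by
    by_contra! ha
    have hzseg := nproj_smul_add_smul_mem_sphSeg ha hb.le (by linarith) p q
    rw [nproj_of_norm_eq_one (mem_uSphere_iff.1 hzs)] at hzseg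
    exact eq_empty_iff_forall_notMem.1 hseg _ ⟨hzseg, hzint⟩
  have hcz := hint _ hzint
  rw [inner_add_right, real_inner_smul_right, real_inner_smul_right, hcq] at hcz
  nlinarith

theorem not_sphIlluminates_of_card_le (hd : 0 < d) {K : Set (Euc (d + 1))} (hKc : IsCompact K)
    (hKne : K.Nonempty) {u : Euc (d + 1)} (hpos : ∀ y ∈ K, 0 < ⟪u, y⟫)
    (S : Finset (Euc (d + 1))) (hSu : ∀ p ∈ S, ⟪u, p⟫ = 0) (hcard : S.card ≤ d) :
    ¬ SphIlluminates d K S := by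
  have hu : u ≠ 0 := by
    rintro rfl
    obtain ⟨y, hy⟩ := hKne
    simpa using hpos y hy
  have : Fact (finrank ℝ (Euc (d + 1)) = d + 1) := ⟨finrank_euclideanSpace_fin⟩
  have hW := Submodule.finrank_orthogonal_span_singleton (𝕜 := ℝ) (n := d) hu
  obtain ⟨c, hcu, hc0, hcS⟩ :=
    Submodule.exists_ne_zero_inner_nonpos (ℝ ∙ u)ᗮ (by omega) S (by omega)
  rw [Submodule.mem_orthogonal_singleton_iff_inner_right] at hcu
  obtain ⟨q, hqK, M, hKc', hcq⟩ := hKc.exists_supporting_inner hKne hpos c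
  have hc' : c - M • u ≠ 0 := by
    intro h
    rw [sub_eq_zero.1 h, real_inner_smul_right, real_inner_self_eq_norm_sq] at hcu
    rw [sub_eq_zero.1 h, (mul_eq_zero.1 hcu).resolve_right (by simpa using hu), zero_smul] at hc0
    exact hc0 rfl
  have hint : ∀ z ∈ sphInt d K, ⟪c - M • u, z⟫ < 0 := fun z hz =>
    inner_neg_of_mem_sphInt hc' hKc' hz
  intro hIll
  obtain ⟨p, hpS, hill⟩ := hIll q ⟨hqK, fun hq => (hint q hq).ne hcq⟩
  refine not_sphIlluminated_of_inner hpos (hSu p hpS) hqK hint hcq ?_ hill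
  rw [inner_sub_left, real_inner_smul_left, hSu p hpS, mul_zero, sub_zero, real_inner_comm]
  exact hcS p hpS

end sphere

/-- No set of at most `d` points on a great sphere disjoint from `K` illuminates `K`;
consequently `I_{S^d}(K) ≥ d + 1`. -/
theorem stmt0 (d : ℕ) (hd : 2 ≤ d) (K : Set (Euc (d + 1))) (hK : IsSphBody d K) :
    (∀ u ∈ uSphere d, greatSphere d u ∩ K = ∅ →
      ∀ S : Finset (Euc (d + 1)), ↑S ⊆ greatSphere d u → S.card ≤ d →
        ¬ SphIlluminates d K ↑S) ∧
    (d + 1 : ℕ∞) ≤ sphIllumNumber d K := by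
  obtain ⟨hKc, hKconv, y₀, hy₀⟩ := hK
  have hKne : K.Nonempty := ⟨y₀, sphInt_subset K hy₀⟩
  have key : ∀ u ∈ uSphere d, greatSphere d u ∩ K = ∅ →
      ∀ S : Finset (Euc (d + 1)), ↑S ⊆ greatSphere d u → S.card ≤ d →
        ¬ SphIlluminates d K ↑S := by
    intro u _ hdisj S hS hcard
    obtain ⟨v, hv, hpos⟩ := hKconv.exists_inner_pos_of_disjoint hKne hdisj
    have hSv : ∀ p ∈ S, ⟪v, p⟫ = 0 := by
      intro p hp
      rcases hv with rfl | rfl <;> simp [(hS hp).2]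
    exact not_sphIlluminates_of_card_le (by omega) hKc hKne hpos S hSv hcard
  refine ⟨key, le_sInf ?_⟩
  rintro _ ⟨u, hu, hdisj, S, hS, hIll, rfl⟩
  exact_mod_cast not_le.1 fun h => key u hu hdisj S hS h hIll
end

section
/- Let d > 2 and let P be a convex polytope in ℝ^d with nonempty interior. Then there exist a point x in the interior of P and d+1 open halfspaces of ℝ^d whose boundary hyperplanes all contain x, such that every proper face of P is contained in at least one of the d+1 open halfspaces. -/
open RealInnerProductSpace Metric Set

noncomputable section

/-! By induction on the dimension of the polytope `P = conv t`. Pick a vertex `p` exposed by a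
functional `n`, normalised so that `⟪n, a - p⟫ > 1` for the other points `a` of `t`, and let the
vertex figure `P'` be the hull of the points `(a - p) / ⟪n, a - p⟫`, a polytope of smaller
dimension lying in the hyperplane `⟪n, ·⟫ = 1` with `p + P' ⊆ P`. If `x'` and `v'` work for `P'`,
take `x = p + x'`. Faces of `P` avoiding `p` lie in `{⟪n, y - x⟫ > 0}`, and a face `F ∋ p`
gives the proper face `{z ∈ P' | p + z ∈ F}` of `P'`, whose halfspace `{⟪v'ⱼ, · - x'⟫ > 0}`
lifts, after tilting `v'ⱼ` slightly by `n`, to a halfspace through `x` containing `F`. The point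
`x` lies in `P` but possibly on its boundary; since the covering condition is open in `x`, it
can be moved into the interior. -/

open Filter Topology Module

theorem exists_pos_forall_le_of_pos {ι : Type*} (s : Finset ι) (f : ι → ℝ) :
    ∃ σ > 0, ∀ i ∈ s, 0 < f i → σ ≤ f i := by
  have : ∀ᶠ σ in 𝓝[>] (0 : ℝ), ∀ i ∈ s, 0 < f i → σ ≤ f i := by
    simp only [Finset.eventually_all, eventually_imp_distrib_left]
    exact fun i _ hi => ((eventually_lt_nhds hi).filter_mono nhdsWithin_le_nhds).mono
      fun _ h => h.le
  obtain ⟨σ, h, hσ⟩ := (this.and self_mem_nhdsWithin).exists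
  exact ⟨σ, hσ, h⟩

section Extreme

variable {𝕜 E : Type*} [Field 𝕜] [LinearOrder 𝕜] [IsStrictOrderedRing 𝕜] [AddCommGroup E]
  [Module 𝕜 E] {A F : Set E}

theorem IsExtreme.subset_convexHull_inter (hF : IsExtreme 𝕜 A F) {s : Finset E}
    (hs : convexHull 𝕜 ↑s ⊆ A) : convexHull 𝕜 ↑s ∩ F ⊆ convexHull 𝕜 (↑s ∩ F) := by
  classical
  induction s using Finset.induction_on with
  | empty => simp
  | insert b s hb ih =>
    rintro y ⟨hy, hyF⟩
    have hsub : (s : Set E) ⊆ ↑(insert b s) := by simp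
    have hbA : b ∈ A := hs (subset_convexHull 𝕜 _ (by simp))
    have hsA : convexHull 𝕜 ↑s ⊆ A := (convexHull_mono hsub).trans hs
    have hmono : convexHull 𝕜 (↑s ∩ F) ⊆ convexHull 𝕜 (↑(insert b s) ∩ F) :=
      convexHull_mono (inter_subset_inter_left _ hsub)
    have hbF : b ∈ F → b ∈ convexHull 𝕜 (↑(insert b s) ∩ F) :=
      fun h => subset_convexHull 𝕜 _ ⟨by simp, h⟩
    rcases s.eq_empty_or_nonempty with rfl | hne
    · obtain rfl : y = b := by simpa using hy
      exact hbF hyF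
    rw [Finset.coe_insert, convexHull_insert (by simpa using hne)] at hy
    obtain ⟨a, ha, z, hz, hyz⟩ := mem_convexJoin.1 hy
    rw [mem_singleton_iff.1 ha, ← insert_endpoints_openSegment] at hyz
    rcases hyz with rfl | rfl | hyz
    · exact hbF hyF
    · exact hmono (ih hsA ⟨hz, hyF⟩)
    · have hzA := hsA hz
      exact (convex_convexHull 𝕜 _).segment_subset
        (hbF (hF.left_mem_of_mem_openSegment hbA hzA hyF hyz))
        (hmono (ih hsA ⟨hz, hF.right_mem_of_mem_openSegment hbA hzA hyF hyz⟩))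
        (openSegment_subset_segment 𝕜 b z hyz)

theorem IsExtreme.inter_preimage_add {B : Set E} {p : E} (hF : IsExtreme 𝕜 A F)
    (hB : ∀ z ∈ B, p + z ∈ A) : IsExtreme 𝕜 B (B ∩ (p + ·) ⁻¹' F) :=
  ⟨inter_subset_left, fun _ h₁ _ h₂ _ hz hseg =>
    ⟨h₁, hF.left_mem_of_mem_openSegment (hB _ h₁) (hB _ h₂) hz.2
      ((mem_openSegment_translate 𝕜 p).2 hseg)⟩⟩

theorem IsExtreme.mem_of_add_smul_sub_mem {p a : E} {θ : 𝕜} (hF : IsExtreme 𝕜 A F)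
    (hp : p ∈ F) (ha : a ∈ A) (hθ : θ ∈ Ioo 0 1) (h : p + θ • (a - p) ∈ F) : a ∈ F :=
  hF.right_mem_of_mem_openSegment (hF.subset hp) ha h
    (by rw [openSegment_eq_image']; exact ⟨θ, hθ, rfl⟩)

end Extreme

theorem IsFace.isExtreme {n : ℕ} {K F : Set (Euc n)} (hF : IsFace K F) : IsExtreme ℝ K F :=
  ⟨hF.1, fun x hx y hy _ hz hzs => hF.2.2 x hx y hy ⟨_, hzs, hz⟩ (left_mem_segment ℝ x y)⟩

section VertexFigure

variable {E : Type*} [NormedAddCommGroup E] [InnerProductSpace ℝ E]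

theorem Finset.Nonempty.exists_forall_one_lt_inner_sub {t : Finset E} (ht : t.Nonempty) :
    ∃ p ∈ t, ∃ n : E, ∀ a ∈ t, a ≠ p → 1 < ⟪n, a - p⟫ := by
  obtain ⟨p, hp, hmax⟩ := t.exists_max_image (‖·‖) ht
  have hpos : ∀ a ∈ t, a ≠ p → 0 < ⟪-p, a - p⟫ := by
    intro a ha hap
    have h₁ : 0 < ‖a - p‖ ^ 2 := pow_pos (norm_pos_iff.2 (sub_ne_zero.2 hap)) 2
    have h₂ := hmax a ha
    rw [norm_sub_sq_real] at h₁
    rw [inner_neg_left, inner_sub_right, real_inner_self_eq_norm_sq, real_inner_comm]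
    nlinarith [norm_nonneg a]
  obtain ⟨σ, hσ, hle⟩ := exists_pos_forall_le_of_pos t fun a => ⟪-p, a - p⟫
  refine ⟨p, hp, (2 / σ) • -p, fun a ha hap => ?_⟩
  rw [real_inner_smul_left]
  calc (1 : ℝ) < 2 / σ * σ := by rw [div_mul_cancel₀ _ hσ.ne']; norm_num
    _ ≤ 2 / σ * ⟪-p, a - p⟫ := by gcongr; exact hle a ha (hpos a ha hap)

theorem add_inv_inner_smul_sub_mem {C : Set E} (hC : Convex ℝ C) {p a n : E} (hp : p ∈ C)
    (ha : a ∈ C) (hr : 1 ≤ ⟪n, a - p⟫) : p + ⟪n, a - p⟫⁻¹ • (a - p) ∈ C :=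
  hC.add_smul_sub_mem hp ha ⟨inv_nonneg.2 (zero_le_one.trans hr), inv_le_one_of_one_le₀ hr⟩

variable [DecidableEq E]

def vertexFigure (t : Finset E) (p n : E) : Finset E :=
  (t.erase p).image fun a => ⟪n, a - p⟫⁻¹ • (a - p)

variable {t : Finset E} {p n : E}

theorem mem_vertexFigure {a : E} (ha : a ∈ t) (hap : a ≠ p) :
    ⟪n, a - p⟫⁻¹ • (a - p) ∈ vertexFigure t p n :=
  Finset.mem_image_of_mem _ (Finset.mem_erase.2 ⟨hap, ha⟩)

theorem inner_eq_one_of_mem_convexHull_vertexFigure (hn : ∀ a ∈ t, a ≠ p → 1 < ⟪n, a - p⟫)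
    {z : E} (hz : z ∈ convexHull ℝ ↑(vertexFigure t p n)) : ⟪n, z⟫ = 1 := by
  refine convexHull_min ?_ (convex_hyperplane (innerₛₗ ℝ n).isLinear 1) hz
  simp only [vertexFigure, Finset.coe_image, image_subset_iff]
  intro a ha
  obtain ⟨hap, ha⟩ := Finset.mem_erase.1 ha
  simp [real_inner_smul_right, (zero_lt_one.trans (hn a ha hap)).ne']

theorem add_mem_convexHull_of_mem_convexHull_vertexFigure (hp : p ∈ t)
    (hn : ∀ a ∈ t, a ≠ p → 1 < ⟪n, a - p⟫) {z : E}
    (hz : z ∈ convexHull ℝ ↑(vertexFigure t p n)) : p + z ∈ convexHull ℝ ↑t := by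
  refine convexHull_min ?_ ((convex_convexHull ℝ _).translate_preimage_right p) hz
  simp only [vertexFigure, Finset.coe_image, image_subset_iff]
  intro a ha
  obtain ⟨hap, ha⟩ := Finset.mem_erase.1 ha
  exact add_inv_inner_smul_sub_mem (convex_convexHull ℝ _) (subset_convexHull ℝ _ hp)
    (subset_convexHull ℝ _ ha) (hn a ha hap).le

theorem convexHull_vertexFigure_inter_preimage_ne (hn : ∀ a ∈ t, a ≠ p → 1 < ⟪n, a - p⟫)
    {F : Set E} (hF : IsExtreme ℝ (convexHull ℝ ↑t) F) (hFc : Convex ℝ F) (hpF : p ∈ F)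
    (hne : F ≠ convexHull ℝ ↑t) :
    convexHull ℝ ↑(vertexFigure t p n) ∩ (p + ·) ⁻¹' F ≠ convexHull ℝ ↑(vertexFigure t p n) := by
  intro h
  refine hne (hF.subset.antisymm (convexHull_min (fun a ha => ?_) hFc))
  by_cases hap : a = p
  · exact hap ▸ hpF
  have hφ : ⟪n, a - p⟫⁻¹ • (a - p) ∈ convexHull ℝ ↑(vertexFigure t p n) :=
    subset_convexHull ℝ _ (mem_vertexFigure ha hap)
  rw [← h] at hφ
  exact hF.mem_of_add_smul_sub_mem hpF (subset_convexHull ℝ _ ha)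
    ⟨inv_pos.2 (zero_lt_one.trans (hn a ha hap)), inv_lt_one_of_one_lt₀ (hn a ha hap)⟩ hφ.2

theorem finrank_vectorSpan_vertexFigure_lt (hp : p ∈ t) (hn : ∀ a ∈ t, a ≠ p → 1 < ⟪n, a - p⟫)
    (ht : t.Nontrivial) :
    finrank ℝ (vectorSpan ℝ (vertexFigure t p n : Set E)) <
      finrank ℝ (vectorSpan ℝ (t : Set E)) := by
  have := finiteDimensional_vectorSpan_of_finite ℝ t.finite_toSet
  set W := vectorSpan ℝ (t : Set E)
  have hW : ∀ z ∈ vertexFigure t p n, z ∈ W := by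
    simp only [vertexFigure, Finset.mem_image, Finset.mem_erase]
    rintro _ ⟨a, ⟨-, ha⟩, rfl⟩
    exact W.smul_mem _ (vsub_mem_vectorSpan ℝ ha hp)
  have hle : vectorSpan ℝ (vertexFigure t p n : Set E) ≤ W ⊓ LinearMap.ker (innerₛₗ ℝ n) := by
    rw [vectorSpan_def, Submodule.span_le]
    rintro _ ⟨z₁, h₁, z₂, h₂, rfl⟩
    refine ⟨W.sub_mem (hW z₁ h₁) (hW z₂ h₂), ?_⟩
    simp [inner_sub_right,
      inner_eq_one_of_mem_convexHull_vertexFigure hn (subset_convexHull ℝ _ h₁),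
      inner_eq_one_of_mem_convexHull_vertexFigure hn (subset_convexHull ℝ _ h₂)]
  have hlt : W ⊓ LinearMap.ker (innerₛₗ ℝ n) < W := by
    obtain ⟨a, ha, hap⟩ := ht.exists_ne p
    refine inf_lt_left.2 fun h => (zero_lt_one.trans (hn a ha hap)).ne' ?_
    simpa using h (vsub_mem_vectorSpan ℝ ha hp)
  exact (Submodule.finrank_mono hle).trans_lt (Submodule.finrank_lt_finrank_of_lt hlt)

end VertexFigure

section HalfspacesCoverFaces

variable {E ι : Type*} [NormedAddCommGroup E] [InnerProductSpace ℝ E]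

/-- Only the points of `t` in a face are tested: a face of `conv t` is the hull of these
(`HalfspacesCoverFaces.exists_subset`). -/
def HalfspacesCoverFaces (t : Finset E) (x : E) (v : ι → E) : Prop :=
  ∀ F, IsExtreme ℝ (convexHull ℝ (t : Set E)) F → Convex ℝ F → F ≠ convexHull ℝ ↑t →
    ∃ i, ∀ b ∈ t, b ∈ F → 0 < ⟪v i, b - x⟫

variable {t : Finset E} {x : E} {v : ι → E}

theorem halfspacesCoverFaces_singleton [Nonempty ι] (p : E) (v : ι → E) :
    HalfspacesCoverFaces {p} p v := by
  intro F hF _ hne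
  refine ⟨Classical.arbitrary ι, fun b hb hbF => absurd ?_ hne⟩
  rw [Finset.mem_singleton.1 hb] at hbF
  simpa using (subset_singleton_iff_eq.1 (by simpa using hF.subset)).resolve_left
    (nonempty_of_mem hbF).ne_empty

/-- The halfspace `{⟪v', · - x'⟫ > 0}` of the vertex figure, tilted by `n` to pass through
`p + x'`: its value at `p` is `σ`. -/
theorem inner_sub_smul_sub_add_pos {n v' b p x' : E} {σ : ℝ} (hnx' : ⟪n, x'⟫ = 1)
    (hσ : 0 < σ) (hb : b ≠ p → 1 < ⟪n, b - p⟫ ∧ σ ≤ ⟪v', ⟪n, b - p⟫⁻¹ • (b - p) - x'⟫) :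
    0 < ⟪v' - (⟪v', x'⟫ + σ) • n, b - (p + x')⟫ := by
  have key : ⟪v' - (⟪v', x'⟫ + σ) • n, b - (p + x')⟫
      = ⟪v', b - p⟫ - (⟪v', x'⟫ + σ) * ⟪n, b - p⟫ + σ := by
    simp only [← sub_sub, inner_sub_left, inner_sub_right, real_inner_smul_left, hnx']
    ring
  rw [key]
  by_cases hbp : b = p
  · simpa [hbp] using hσ
  obtain ⟨hr, hle⟩ := hb hbp
  rw [inner_sub_right, real_inner_smul_right, le_sub_iff_add_le,
    le_inv_mul_iff₀ (zero_lt_one.trans hr)] at hle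
  linarith

theorem HalfspacesCoverFaces.of_vertexFigure [DecidableEq E] {k : ℕ} {p n x' : E}
    {v' : Fin k → E} (hp : p ∈ t) (hn : ∀ a ∈ t, a ≠ p → 1 < ⟪n, a - p⟫)
    (hx' : x' ∈ convexHull ℝ ↑(vertexFigure t p n))
    (hv' : HalfspacesCoverFaces (vertexFigure t p n) x' v') :
    ∃ v : Fin (k + 1) → E, HalfspacesCoverFaces t (p + x') v := by
  choose σ hσ hσle using fun j =>
    exists_pos_forall_le_of_pos (vertexFigure t p n) fun z => ⟪v' j, z - x'⟫
  have hnx' := inner_eq_one_of_mem_convexHull_vertexFigure hn hx'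
  refine ⟨Fin.cons n fun j => v' j - (⟪v' j, x'⟫ + σ j) • n, fun F hF hFc hne => ?_⟩
  by_cases hpF : p ∈ F
  · obtain ⟨j, hj⟩ := hv' _
      (hF.inter_preimage_add fun z => add_mem_convexHull_of_mem_convexHull_vertexFigure hp hn)
      ((convex_convexHull ℝ _).inter (hFc.translate_preimage_right p))
      (convexHull_vertexFigure_inter_preimage_ne hn hF hFc hpF hne)
    refine ⟨j.succ, fun b hb hbF => ?_⟩
    rw [Fin.cons_succ]
    refine inner_sub_smul_sub_add_pos hnx' (hσ j) fun hbp => ⟨hn b hb hbp, ?_⟩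
    have hb' := mem_vertexFigure (n := n) hb hbp
    exact hσle j _ hb' (hj _ hb' ⟨subset_convexHull ℝ _ hb',
      add_inv_inner_smul_sub_mem hFc hpF hbF (hn b hb hbp).le⟩)
  · refine ⟨0, fun b hb hbF => ?_⟩
    have hbp : b ≠ p := fun h => hpF (h ▸ hbF)
    rw [Fin.cons_zero, ← sub_sub, inner_sub_right, hnx', sub_pos]
    exact hn b hb hbp

theorem exists_halfspacesCoverFaces (k : ℕ) {t : Finset E} (ht : t.Nonempty)
    (hk : finrank ℝ (vectorSpan ℝ (t : Set E)) ≤ k) :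
    ∃ x ∈ convexHull ℝ ↑t, ∃ v : Fin (k + 1) → E, HalfspacesCoverFaces t x v := by
  classical
  obtain ⟨p, rfl⟩ | hnt := ht.exists_eq_singleton_or_nontrivial
  · exact ⟨p, by simp, 0, halfspacesCoverFaces_singleton p 0⟩
  obtain ⟨p, hp, n, hn⟩ := ht.exists_forall_one_lt_inner_sub
  have hlt := finrank_vectorSpan_vertexFigure_lt (n := n) hp hn hnt
  have hne : (vertexFigure t p n).Nonempty := hnt.erase_nonempty.image _
  obtain ⟨k, rfl⟩ : ∃ k', k = k' + 1 := Nat.exists_eq_add_one.2 (by omega)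
  obtain ⟨x', hx', v', hv'⟩ := exists_halfspacesCoverFaces k hne (by omega)
  exact ⟨p + x', add_mem_convexHull_of_mem_convexHull_vertexFigure hp hn hx',
    hv'.of_vertexFigure hp hn hx'⟩

theorem HalfspacesCoverFaces.eventually_nhds [Finite ι] (hv : HalfspacesCoverFaces t x v) :
    ∀ᶠ y in 𝓝 x, HalfspacesCoverFaces t y v := by
  have : ∀ᶠ y in 𝓝 x, ∀ i, ∀ b ∈ t, 0 < ⟪v i, b - x⟫ → 0 < ⟪v i, b - y⟫ := by
    simp only [eventually_all, Finset.eventually_all]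
    exact fun i b _ h => continuousAt_const.eventually_lt (by fun_prop) h
  filter_upwards [this] with y hy F hF hFc hne
  obtain ⟨i, hi⟩ := hv F hF hFc hne
  exact ⟨i, fun b hb hbF => hy i b hb (hi b hb hbF)⟩

theorem HalfspacesCoverFaces.exists_ne_zero [Nontrivial E] (hv : HalfspacesCoverFaces t x v) :
    ∃ w : ι → E, (∀ i, w i ≠ 0) ∧ HalfspacesCoverFaces t x w := by
  classical
  obtain ⟨e, he⟩ := exists_ne (0 : E)
  refine ⟨fun i => if v i = 0 then e else v i, fun i => ?_, fun F hF hFc hne => ?_⟩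
  · dsimp only
    split_ifs with h
    exacts [he, h]
  obtain ⟨i, hi⟩ := hv F hF hFc hne
  refine ⟨i, fun b hb hbF => ?_⟩
  have h := hi b hb hbF
  dsimp only
  rwa [if_neg fun h0 => by simp [h0] at h]

theorem HalfspacesCoverFaces.exists_subset (hv : HalfspacesCoverFaces t x v) {F : Set E}
    (hF : IsExtreme ℝ (convexHull ℝ ↑t) F) (hFc : Convex ℝ F) (hne : F ≠ convexHull ℝ ↑t) :
    ∃ i, F ⊆ {y | 0 < ⟪v i, y - x⟫} := by
  obtain ⟨i, hi⟩ := hv F hF hFc hne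
  have hconv : Convex ℝ {y | 0 < ⟪v i, y - x⟫} := by
    simpa [inner_sub_right] using convex_halfSpace_gt (innerₛₗ ℝ (v i)).isLinear ⟪v i, x⟫
  refine ⟨i, fun y hy => convexHull_min (fun b (hb : b ∈ (t : Set E) ∩ F) => hi b hb.1 hb.2)
    hconv (hF.subset_convexHull_inter subset_rfl ⟨hF.subset hy, hy⟩)⟩

end HalfspacesCoverFaces

/-- For any convex polytope `P ⊆ ℝ^d`, `d > 2`, with nonempty interior, there are an
interior point `x` of `P` and `d + 1` open halfspaces whose boundary hyperplanes all
contain `x` such that every proper face of `P` is contained in one of the halfspaces. -/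
theorem stmt13 (d : ℕ) (hd : 2 < d) (s : Finset (Euc d)) (P : Set (Euc d))
    (hP : P = convexHull ℝ (↑s : Set (Euc d))) (hint : (interior P).Nonempty) :
    ∃ x ∈ interior P, ∃ v : Fin (d + 1) → Euc d, (∀ i, v i ≠ 0) ∧
      ∀ F, IsFace P F → F ≠ P → ∃ i, F ⊆ {y | 0 < ⟪v i, y - x⟫} := by
  subst hP
  have hs : s.Nonempty := by simpa using hint.mono interior_subset
  obtain ⟨x₀, hx₀, v₀, hv₀⟩ := exists_halfspacesCoverFaces d hs
    ((Submodule.finrank_le _).trans (finrank_euclideanSpace_fin).le)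
  have hx₀' : x₀ ∈ closure (interior (convexHull ℝ (s : Set (Euc d)))) := by
    rw [(convex_convexHull ℝ _).closure_interior_eq_closure_of_nonempty_interior hint]
    exact subset_closure hx₀
  obtain ⟨x, hxv, hx⟩ :=
    (hv₀.eventually_nhds.and_frequently (mem_closure_iff_frequently.1 hx₀')).exists
  have : Nontrivial (Euc d) := Module.nontrivial_of_finrank_pos (R := ℝ) (by simp; omega)
  obtain ⟨v, hv0, hv⟩ := hxv.exists_ne_zero
  exact ⟨x, hx, v, hv0, fun F hF hne => hv.exists_subset hF.isExtreme hF.2.1 hne⟩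
end
end
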